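/- arXiv:math/0402415 — 7 statements merged into one kernel-verified Lean document; each statement's English description precedes it below -/
import Mathlib

section
/- A sequence (W_n) of integers with W_0 = 0 and W_1 = 1 satisfies the full EDS recursion W_{m+n}·W_{m-n} = W_{m+1}·W_{m-1}·W_n² − W_{n+1}·W_{n-1}·W_m² for all m ≥ n ≥ 1, provided it satisfies the two special cases W_{2n+1} = W_{n+2}·W_n³ − W_{n−1}·W_{n+1}³ and W_{2n}·W_2 = W_n·(W_{n+2}·W_{n−1}² − W_{n−2}·W_{n+1}²) for all applicable n, under the assumption that W_n ≠ 0 for all n ≥ 1. -/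
/-- The EDS recursion for a sequence of integers. -/
def IsEDS (W : ℕ → ℤ) : Prop :=
  ∀ m n : ℕ, 1 ≤ n → n ≤ m →
    W (m + n) * W (m - n) =
      W (m + 1) * W (m - 1) * (W n) ^ 2 - W (n + 1) * W (n - 1) * (W m) ^ 2

theorem eds_from_duplication (W : ℕ → ℤ) (h0 : W 0 = 0) (h1 : W 1 = 1)
    (hnz : ∀ n : ℕ, 1 ≤ n → W n ≠ 0)
    (hodd : ∀ n : ℕ, 1 ≤ n →
      W (2 * n + 1) = W (n + 2) * (W n) ^ 3 - W (n - 1) * (W (n + 1)) ^ 3)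
    (heven : ∀ n : ℕ, 2 ≤ n →
      W (2 * n) * W 2 = W n * (W (n + 2) * (W (n - 1)) ^ 2 - W (n - 2) * (W (n + 1)) ^ 2)) :
    IsEDS W := by
  -- convenient index-canonicalized versions of the hypotheses
  have hodd' : ∀ t a₁ a₂ a₃ a₄ : ℕ, 1 ≤ t → a₁ = 2*t+1 → a₂ = t+2 → a₃ = t-1 → a₄ = t+1 →
      W a₁ = W a₂ * W t ^ 3 - W a₃ * W a₄ ^ 3 := by
    intro t a₁ a₂ a₃ a₄ ht e₁ e₂ e₃ e₄
    subst e₁; subst e₂; subst e₃; subst e₄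
    exact hodd t ht
  have heven' : ∀ t a₁ a₂ a₃ a₄ a₅ : ℕ, 2 ≤ t → a₁ = 2*t → a₂ = t+2 → a₃ = t-1 → a₄ = t-2 →
      a₅ = t+1 → W a₁ * W 2 = W t * (W a₂ * W a₃ ^ 2 - W a₄ * W a₅ ^ 2) := by
    intro t a₁ a₂ a₃ a₄ a₅ ht e₁ e₂ e₃ e₄ e₅
    subst e₁; subst e₂; subst e₃; subst e₄; subst e₅
    exact heven t ht
  have h2 : W 2 ≠ 0 := hnz 2 (by omega)
  -- the key statement in addition-only form, by strong induction on the sum of indices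
  have key : ∀ s q c : ℕ, 2*q+2+c = s →
      W (2*q+2+c) * W c = W (q+c+2) * W (q+c) * W (q+1) ^ 2 - W (q+2) * W q * W (q+1+c) ^ 2 := by
    intro s
    induction s using Nat.strong_induction_on with
    | _ s IH =>
    intro q c hs
    subst hs
    have G0 : ∀ q' c' a₁ a₂ a₃ a₄ a₅ a₆ a₇ : ℕ, 2*q'+2+c' < 2*q+2+c →
        a₁ = 2*q'+2+c' → a₂ = q'+c'+2 → a₃ = q'+c' → a₄ = q'+1 → a₅ = q'+2 → a₆ = q' →
        a₇ = q'+1+c' →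
        W a₁ * W c' = W a₂ * W a₃ * W a₄ ^ 2 - W a₅ * W a₆ * W a₇ ^ 2 := by
      intro q' c' a₁ a₂ a₃ a₄ a₅ a₆ a₇ hlt e₁ e₂ e₃ e₄ e₅ e₆ e₇
      subst e₁; subst e₂; subst e₃; subst e₄; subst e₅; subst e₆; subst e₇
      exact IH _ hlt _ _ rfl
    rcases (show c = 0 ∨ c = 1 ∨ c = 2 ∨ 3 ≤ c from by omega) with rfl | rfl | rfl | hc
    · -- c = 0
      rw [h0, show q+0+2 = q+2 from by omega, show q+0 = q from by omega,
        show q+1+0 = q+1 from by omega]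
      ring
    · -- c = 1
      rw [show 2*q+2+1 = 2*q+3 from by omega, show q+1+2 = q+3 from by omega,
        show q+1+1 = q+2 from by omega, h1]
      have HO := hodd' (q+1) (2*q+3) (q+3) q (q+2) (by omega) (by omega) (by omega) (by omega)
        (by omega)
      linear_combination HO
    · -- c = 2
      rw [show 2*q+2+2 = 2*q+4 from by omega, show q+2+2 = q+4 from by omega,
        show q+1+2 = q+3 from by omega]
      have HE := heven' (q+2) (2*q+4) (q+4) (q+1) q (q+3) (by omega) (by omega) (by omega)
        (by omega) (by omega) (by omega)
      linear_combination HE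
    · obtain ⟨i, rfl | rfl⟩ : ∃ i, c = 2*i+3 ∨ c = 2*i+4 := ⟨(c-3)/2, by omega⟩
      · -- c odd, c = 2i+3
        rcases (show q = 0 ∨ 1 ≤ q from by omega) with rfl | hq
        · -- n = 1 : trivial
          rw [show 2*0+2+(2*i+3) = 2*i+5 from by omega, show 0+(2*i+3)+2 = 2*i+5 from by omega,
            show 0+(2*i+3) = 2*i+3 from by omega, show 0+1+(2*i+3) = 2*i+4 from by omega,
            show 0+1 = 1 from by omega, show 0+2 = 2 from by omega, h0, h1]
          ring
        · obtain ⟨f, rfl⟩ : ∃ f, q = f+1 := ⟨q-1, by omega⟩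
          rw [show 2*(f+1)+2+(2*i+3) = 2*f+2*i+7 from by omega,
            show f+1+(2*i+3)+2 = f+2*i+6 from by omega,
            show f+1+(2*i+3) = f+2*i+4 from by omega,
            show f+1+1+(2*i+3) = f+2*i+5 from by omega,
            show f+1+1 = f+2 from by omega, show f+1+2 = f+3 from by omega]
          have HK := hodd' (f+i+3) (2*f+2*i+7) (f+i+5) (f+i+2) (f+i+4) (by omega) (by omega)
            (by omega) (by omega) (by omega)
          have HJ := hodd' (i+1) (2*i+3) (i+3) i (i+2) (by omega) (by omega) (by omega)
            (by omega) (by omega)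
          have E1 := G0 (i+1) (f+2) (f+2*i+6) (f+i+5) (f+i+3) (i+2) (i+3) (i+1) (f+i+4)
            (by omega) (by omega) (by omega) (by omega) (by omega) (by omega) (by omega) (by omega)
          have E2 := G0 i (f+2) (f+2*i+4) (f+i+4) (f+i+2) (i+1) (i+2) i (f+i+3)
            (by omega) (by omega) (by omega) (by omega) (by omega) (by omega) (by omega) (by omega)
          have E3 := G0 i (f+3) (f+2*i+5) (f+i+5) (f+i+3) (i+1) (i+2) i (f+i+4)
            (by omega) (by omega) (by omega) (by omega) (by omega) (by omega) (by omega) (by omega)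
          have E4 := G0 (i+1) (f+1) (f+2*i+5) (f+i+4) (f+i+2) (i+2) (i+3) (i+1) (f+i+3)
            (by omega) (by omega) (by omega) (by omega) (by omega) (by omega) (by omega) (by omega)
          linear_combination (W (2*i+3)) * HK
            + (W (f+i+5) * W (f+i+3) ^ 3 - W (f+i+2) * W (f+i+4) ^ 3) * HJ
            - (W (f+2*i+4) * W (f+2)) * E1
            - (W (f+i+5) * W (f+i+3) * W (i+2) ^ 2 - W (i+3) * W (i+1) * W (f+i+4) ^ 2) * E2
            + (W (f+2*i+5) * W (f+1)) * E3
            + (W (f+i+5) * W (f+i+3) * W (i+1) ^ 2 - W (i+2) * W i * W (f+i+4) ^ 2) * E4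
      · -- c even, c = 2i+4
        rcases (show q = 0 ∨ q = 1 ∨ 2 ≤ q from by omega) with rfl | rfl | hq
        · -- n = 1 : trivial
          rw [show 2*0+2+(2*i+4) = 2*i+6 from by omega, show 0+(2*i+4)+2 = 2*i+6 from by omega,
            show 0+(2*i+4) = 2*i+4 from by omega, show 0+1+(2*i+4) = 2*i+5 from by omega,
            show 0+1 = 1 from by omega, show 0+2 = 2 from by omega, h0, h1]
          ring
        · -- n = 2 : the special case, via the certificate
          rw [show 2*1+2+(2*i+4) = 2*i+8 from by omega, show 1+(2*i+4)+2 = 2*i+7 from by omega,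
            show 1+(2*i+4) = 2*i+5 from by omega, show 1+1+(2*i+4) = 2*i+6 from by omega,
            show 1+1 = 2 from by omega, show 1+2 = 3 from by omega, h1, mul_one]
          have hp := heven' (i+4) (2*i+8) (i+6) (i+3) (i+2) (i+5) (by omega) (by omega)
            (by omega) (by omega) (by omega) (by omega)
          have hm := heven' (i+2) (2*i+4) (i+4) (i+1) i (i+3) (by omega) (by omega)
            (by omega) (by omega) (by omega) (by omega)
          have h0e := heven' (i+3) (2*i+6) (i+5) (i+2) (i+1) (i+4) (by omega) (by omega)
            (by omega) (by omega) (by omega) (by omega)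
          have ho1 := hodd' (i+3) (2*i+7) (i+5) (i+2) (i+4) (by omega) (by omega) (by omega)
            (by omega) (by omega)
          have ho2 := hodd' (i+2) (2*i+5) (i+4) (i+1) (i+3) (by omega) (by omega) (by omega)
            (by omega) (by omega)
          have ea := G0 1 (i+2) (i+6) (i+5) (i+3) 2 3 1 (i+4)
            (by omega) (by omega) (by omega) (by omega) (by omega) (by omega) (by omega) (by omega)
          have eb := G0 1 i (i+4) (i+3) (i+1) 2 3 1 (i+2)
            (by omega) (by omega) (by omega) (by omega) (by omega) (by omega) (by omega) (by omega)
          have ec := G0 1 (i+1) (i+5) (i+4) (i+2) 2 3 1 (i+3)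
            (by omega) (by omega) (by omega) (by omega) (by omega) (by omega) (by omega) (by omega)
          rw [h1, mul_one] at ea eb ec
          have main : (W (2*i+8) * W (2*i+4)) * W 2 ^ 2
              = (W (2*i+7) * W (2*i+5) * W 2 ^ 2 - W 3 * W (2*i+6) ^ 2) * W 2 ^ 2 := by
            linear_combination (W (2*i+4) * W 2) * hp
              + (W (i+4) * (W (i+6) * W (i+3) ^ 2 - W (i+2) * W (i+5) ^ 2)) * hm
              - (W 2 ^ 4 * W (2*i+5)) * ho1
              - (W 2 ^ 4 * (W (i+5) * W (i+3) ^ 3 - W (i+2) * W (i+4) ^ 3)) * ho2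
              + (W 3 * (W (2*i+6) * W 2 + W (i+3) * (W (i+5) * W (i+2) ^ 2
                  - W (i+1) * W (i+4) ^ 2))) * h0e
              + (W (i+2) ^ 3 * W (i+3) ^ 2 * W (i+4) * W 2 ^ 2 - W (i+1) * W (i+3) ^ 5 * W 2 ^ 2
                  - W (i+1) * W (i+2) ^ 2 * W (i+3) ^ 2 * W (i+5)
                  + W (i+1) ^ 2 * W (i+3) ^ 2 * W (i+4) ^ 2) * ea
              + (- (W (i+3) ^ 4 * W (i+4) ^ 2 * W 3) + W (i+2) * W (i+3) ^ 2 * W (i+4) ^ 3 * W 2 ^ 2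
                  - W (i+2) * W (i+3) ^ 4 * W (i+6) + W (i+2) ^ 2 * W (i+3) ^ 2 * W (i+5) ^ 2
                  - W (i+1) * W (i+3) ^ 2 * W (i+4) ^ 2 * W (i+5)) * eb
              + (W (i+2) ^ 2 * W (i+3) ^ 2 * W (i+4) ^ 2 * W 3
                  - W (i+2) ^ 3 * W (i+4) ^ 3 * W 2 ^ 2 + W (i+2) ^ 3 * W (i+3) ^ 2 * W (i+6)
                  - W (i+1) * W (i+2) ^ 2 * W (i+4) ^ 2 * W (i+5)
                  + W i * W (i+3) ^ 2 * W (i+4) ^ 3) * ec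
          exact mul_right_cancel₀ (pow_ne_zero 2 h2) main
        · -- n ≥ 3 : general even case
          obtain ⟨f, rfl⟩ : ∃ f, q = f+2 := ⟨q-2, by omega⟩
          rw [show 2*(f+2)+2+(2*i+4) = 2*f+2*i+10 from by omega,
            show f+2+(2*i+4)+2 = f+2*i+8 from by omega,
            show f+2+(2*i+4) = f+2*i+6 from by omega,
            show f+2+1+(2*i+4) = f+2*i+7 from by omega,
            show f+2+1 = f+3 from by omega, show f+2+2 = f+4 from by omega]
          have HevK := heven' (f+i+5) (2*f+2*i+10) (f+i+7) (f+i+4) (f+i+3) (f+i+6) (by omega)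
            (by omega) (by omega) (by omega) (by omega) (by omega)
          have HevJ := heven' (i+2) (2*i+4) (i+4) (i+1) i (i+3) (by omega) (by omega)
            (by omega) (by omega) (by omega) (by omega)
          have F1 := G0 (i+2) (f+3) (f+2*i+9) (f+i+7) (f+i+5) (i+3) (i+4) (i+2) (f+i+6)
            (by omega) (by omega) (by omega) (by omega) (by omega) (by omega) (by omega) (by omega)
          have F2 := G0 i (f+3) (f+2*i+5) (f+i+5) (f+i+3) (i+1) (i+2) i (f+i+4)
            (by omega) (by omega) (by omega) (by omega) (by omega) (by omega) (by omega) (by omega)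
          have F3 := G0 i (f+5) (f+2*i+7) (f+i+7) (f+i+5) (i+1) (i+2) i (f+i+6)
            (by omega) (by omega) (by omega) (by omega) (by omega) (by omega) (by omega) (by omega)
          have F4 := G0 (i+2) (f+1) (f+2*i+7) (f+i+5) (f+i+3) (i+3) (i+4) (i+2) (f+i+4)
            (by omega) (by omega) (by omega) (by omega) (by omega) (by omega) (by omega) (by omega)
          have Ev : W (2*f+2*i+10) * W (2*i+4) * W 2 ^ 2
              = W (f+2*i+9) * W (f+2*i+5) * W (f+3) ^ 2
                - W (f+5) * W (f+1) * W (f+2*i+7) ^ 2 := by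
            linear_combination (W (2*i+4) * W 2) * HevK
              + (W (f+i+5) * (W (f+i+7) * W (f+i+4) ^ 2 - W (f+i+3) * W (f+i+6) ^ 2)) * HevJ
              - (W (f+2*i+5) * W (f+3)) * F1
              - (W (f+i+7) * W (f+i+5) * W (i+3) ^ 2 - W (i+4) * W (i+2) * W (f+i+6) ^ 2) * F2
              + (W (f+1) * W (f+2*i+7)) * F3
              + (W (f+i+7) * W (f+i+5) * W (i+1) ^ 2 - W (i+2) * W i * W (f+i+6) ^ 2) * F4
          have Gm2 := G0 1 (f+2*i+5) (f+2*i+9) (f+2*i+8) (f+2*i+6) 2 3 1 (f+2*i+7)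
            (by omega) (by omega) (by omega) (by omega) (by omega) (by omega) (by omega) (by omega)
          have Gn2 := G0 1 (f+1) (f+5) (f+4) (f+2) 2 3 1 (f+3)
            (by omega) (by omega) (by omega) (by omega) (by omega) (by omega) (by omega) (by omega)
          rw [h1, mul_one] at Gm2 Gn2
          have main : (W (2*f+2*i+10) * W (2*i+4)) * W 2 ^ 2
              = (W (f+2*i+8) * W (f+2*i+6) * W (f+3) ^ 2
                - W (f+4) * W (f+2) * W (f+2*i+7) ^ 2) * W 2 ^ 2 := by
            linear_combination Ev + W (f+3) ^ 2 * Gm2 - W (f+2*i+7) ^ 2 * Gn2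
          exact mul_right_cancel₀ (pow_ne_zero 2 h2) main
  -- derive the final statement
  intro m n hn hnm
  have inst := key (m+n) (n-1) (m-n) (by omega)
  rw [show 2*(n-1)+2+(m-n) = m+n from by omega, show n-1+(m-n)+2 = m+1 from by omega,
    show n-1+(m-n) = m-1 from by omega, show n-1+1+(m-n) = m from by omega,
    show n-1+1 = n from by omega, show n-1+2 = n+1 from by omega] at inst
  exact inst
end

section
/- If (W_n) satisfies the EDS recursion with W_0 = 0 and W_1 = 1, then for all d ≥ 1 and n ≥ 2: W_d²·W_{(n+2)d}·W_{(n−2)d} = W_{2d}²·W_{(n+1)d}·W_{(n−1)d} − W_d·W_{3d}·W_{nd}². -/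
theorem eds_subsequence (W : ℕ → ℤ) (h : IsEDS W) (h0 : W 0 = 0) (h1 : W 1 = 1) :
    ∀ d : ℕ, 1 ≤ d → ∀ n : ℕ, 2 ≤ n →
      (W d) ^ 2 * W ((n + 2) * d) * W ((n - 2) * d) =
        (W (2 * d)) ^ 2 * W ((n + 1) * d) * W ((n - 1) * d)
          - W d * W (3 * d) * (W (n * d)) ^ 2 := by
  intro d hd n hn
  have h1a := h (n * d) (2 * d) (by omega) (by nlinarith)
  have h2a := h (n * d) d hd (by nlinarith)
  have h3a := h (2 * d) d hd (by omega)
  have e1 : n * d + 2 * d = (n + 2) * d := by ring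
  have e2 : n * d - 2 * d = (n - 2) * d := (Nat.sub_mul n 2 d).symm
  have e3 : n * d + d = (n + 1) * d := by ring
  have e4 : n * d - d = (n - 1) * d := by rw [Nat.sub_mul, Nat.one_mul]
  have e5 : 2 * d + d = 3 * d := by ring
  have e6 : 2 * d - d = d := by omega
  rw [e1, e2] at h1a
  rw [e3, e4] at h2a
  rw [e5, e6] at h3a
  linear_combination (W d) ^ 2 * h1a - (W (2 * d)) ^ 2 * h2a + (W (n * d)) ^ 2 * h3a
end

section
/- Let (W_n) satisfy the EDS recursion with W_0 = 0, W_1 = 1, and suppose W_n ≠ 0 for all n ≥ 1. If W_2 and W_4 are odd, then W_{2^k} is odd for all k ≥ 0. -/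
private lemma zmod2_cases (a : ZMod 2) : a = 0 ∨ a = 1 := by revert a; decide

private lemma odd_iff_cast (x : ℤ) : Odd x ↔ (x : ZMod 2) = 1 := by
  have h2 : ((x : ZMod 2) = 0) ↔ (2 : ℤ) ∣ x := ZMod.intCast_zmod_eq_zero_iff_dvd x 2
  have hne : ∀ a : ZMod 2, (¬ a = 0) ↔ a = 1 := by decide
  rw [← hne, h2, Int.odd_iff]
  omega

private lemma key3 (g : ℕ → ZMod 2)
    (hg0 : g 0 = 0) (hg1 : g 1 = 1) (hg2 : g 2 = 1) (hg3 : g 3 = 0) (hg4 : g 4 = 1)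
    (recA : ∀ n, 1 ≤ n →
      g (2*n+1) = g (n+2) * g n * g n ^ 2 - g (n+1) * g (n-1) * g (n+1) ^ 2)
    (recB : ∀ n, 2 ≤ n →
      g (2*n) = g (n+2) * g n * g (n-1) ^ 2 - g n * g (n-2) * g (n+1) ^ 2) :
    ∀ n, g n = if 3 ∣ n then 0 else 1 := by
  intro n
  induction n using Nat.strong_induction_on with
  | _ n IH =>
    by_cases hn : n < 5
    · interval_cases n <;> simp only [hg0, hg1, hg2, hg3, hg4] <;> decide
    · push_neg at hn
      obtain ⟨m, rfl | rfl⟩ := Nat.even_or_odd' n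
      · rw [recB m (by omega), IH (m+2) (by omega), IH m (by omega),
          IH (m-1) (by omega), IH (m-2) (by omega), IH (m+1) (by omega)]
        rcases (by omega : m % 3 = 0 ∨ m % 3 = 1 ∨ m % 3 = 2) with hm | hm | hm <;>
          split_ifs <;> first | decide | omega
      · rw [recA m (by omega), IH (m+2) (by omega), IH m (by omega),
          IH (m-1) (by omega), IH (m+1) (by omega)]
        rcases (by omega : m % 3 = 0 ∨ m % 3 = 1 ∨ m % 3 = 2) with hm | hm | hm <;>
          split_ifs <;> first | decide | omega

private lemma key5 (g : ℕ → ZMod 2)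
    (hg0 : g 0 = 0) (hg1 : g 1 = 1) (hg2 : g 2 = 1) (hg3 : g 3 = 1) (hg4 : g 4 = 1)
    (recA : ∀ n, 1 ≤ n →
      g (2*n+1) = g (n+2) * g n * g n ^ 2 - g (n+1) * g (n-1) * g (n+1) ^ 2)
    (recB : ∀ n, 2 ≤ n →
      g (2*n) = g (n+2) * g n * g (n-1) ^ 2 - g n * g (n-2) * g (n+1) ^ 2) :
    ∀ n, g n = if 5 ∣ n then 0 else 1 := by
  intro n
  induction n using Nat.strong_induction_on with
  | _ n IH =>
    by_cases hn : n < 5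
    · interval_cases n <;> simp only [hg0, hg1, hg2, hg3, hg4] <;> decide
    · push_neg at hn
      obtain ⟨m, rfl | rfl⟩ := Nat.even_or_odd' n
      · rw [recB m (by omega), IH (m+2) (by omega), IH m (by omega),
          IH (m-1) (by omega), IH (m-2) (by omega), IH (m+1) (by omega)]
        rcases (by omega : m % 5 = 0 ∨ m % 5 = 1 ∨ m % 5 = 2 ∨ m % 5 = 3 ∨ m % 5 = 4) with
          hm | hm | hm | hm | hm <;> split_ifs <;> first | decide | omega
      · rw [recA m (by omega), IH (m+2) (by omega), IH m (by omega),
          IH (m-1) (by omega), IH (m+1) (by omega)]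
        rcases (by omega : m % 5 = 0 ∨ m % 5 = 1 ∨ m % 5 = 2 ∨ m % 5 = 3 ∨ m % 5 = 4) with
          hm | hm | hm | hm | hm <;> split_ifs <;> first | decide | omega

theorem eds_pow_two_odd (W : ℕ → ℤ) (h : IsEDS W) (h0 : W 0 = 0) (h1 : W 1 = 1)
    (hnz : ∀ n : ℕ, 1 ≤ n → W n ≠ 0) (h2 : Odd (W 2)) (h4 : Odd (W 4)) :
    ∀ k : ℕ, Odd (W (2 ^ k)) := by
  let g : ℕ → ZMod 2 := fun n => ((W n : ℤ) : ZMod 2)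
  have hg0 : g 0 = 0 := by show ((W 0 : ℤ) : ZMod 2) = 0; rw [h0]; norm_num
  have hg1 : g 1 = 1 := by show ((W 1 : ℤ) : ZMod 2) = 1; rw [h1]; norm_num
  have hg2 : g 2 = 1 := (odd_iff_cast _).mp h2
  have hg4 : g 4 = 1 := (odd_iff_cast _).mp h4
  have recA : ∀ n, 1 ≤ n →
      g (2*n+1) = g (n+2) * g n * g n ^ 2 - g (n+1) * g (n-1) * g (n+1) ^ 2 := by
    intro n hn
    have e := h (n+1) n hn (by omega)
    rw [show n+1+n = 2*n+1 from by omega, show n+1-n = 1 from by omega,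
      show n+1+1 = n+2 from by omega, show n+1-1 = n from by omega, h1, mul_one] at e
    have e2 := congrArg (fun x : ℤ => (x : ZMod 2)) e
    push_cast at e2
    exact e2
  have recB : ∀ n, 2 ≤ n →
      g (2*n) = g (n+2) * g n * g (n-1) ^ 2 - g n * g (n-2) * g (n+1) ^ 2 := by
    intro n hn
    have e := h (n+1) (n-1) (by omega) (by omega)
    rw [show n+1+(n-1) = 2*n from by omega, show n+1-(n-1) = 2 from by omega,
      show n+1+1 = n+2 from by omega, show n+1-1 = n from by omega,
      show n-1+1 = n from by omega, show n-1-1 = n-2 from by omega] at e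
    have e2 := congrArg (fun x : ℤ => (x : ZMod 2)) e
    push_cast at e2
    have hW2 : ((W 2 : ℤ) : ZMod 2) = 1 := hg2
    rw [hW2, mul_one] at e2
    exact e2
  intro k
  rw [odd_iff_cast]
  rcases zmod2_cases (g 3) with hg3 | hg3
  · have hk := key3 g hg0 hg1 hg2 hg3 hg4 recA recB (2^k)
    rw [if_neg] at hk
    · exact hk
    · intro hd
      have h32 : (3:ℕ) ∣ 2 := Nat.Prime.dvd_of_dvd_pow (by norm_num) hd
      omega
  · have hk := key5 g hg0 hg1 hg2 hg3 hg4 recA recB (2^k)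
    rw [if_neg] at hk
    · exact hk
    · intro hd
      have h52 : (5:ℕ) ∣ 2 := Nat.Prime.dvd_of_dvd_pow (by norm_num) hd
      omega
end

section
/- If a sequence (U_n)_{n≥1} of positive integers is realizable (i.e., there exists a set X and a map T : X → X with U_n = #{x ∈ X : T^n(x) = x} for all n ≥ 1), then for every prime p and every k ≥ 1, U_{p^k} ≡ U_{p^{k−1}} (mod p^k). -/
/-- A sequence of positive integers is realizable if it counts the periodic
points of the iterates of some map. -/
def Realizable (U : ℕ → ℕ) : Prop :=
  ∃ (X : Type) (T : X → X), ∀ n : ℕ, 1 ≤ n →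
    ∃ s : Finset X, (∀ x : X, T^[n] x = x ↔ x ∈ s) ∧ s.card = U n

open Finset

theorem Cycle.mem_toFinset {α : Type*} [DecidableEq α] {s : Cycle α} {a : α} :
    a ∈ s.toFinset ↔ a ∈ s :=
  Quotient.inductionOn' s fun _ => by simp

namespace Function

variable {α : Type*} {f : α → α}

theorem minimalPeriod_eq_prime_pow_iff {p k : ℕ} (hp : p.Prime) {x : α} :
    minimalPeriod f x = p ^ (k + 1) ↔
      IsPeriodicPt f (p ^ (k + 1)) x ∧ ¬IsPeriodicPt f (p ^ k) x := by
  refine ⟨fun hx => ?_, fun ⟨hx, hxk⟩ => minimalPeriod_eq_prime_pow (hp := ⟨hp⟩) hxk hx⟩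
  simp [isPeriodicPt_iff_minimalPeriod_dvd, hx, Nat.pow_dvd_pow_iff_le_right hp.one_lt]

variable [DecidableEq α]

theorem card_toFinset_periodicOrbit (x : α) :
    #(periodicOrbit f x).toFinset = minimalPeriod f x := by
  rw [← periodicOrbit_length, ← Cycle.card_toMultiset]
  exact Multiset.toFinset_card_of_nodup nodup_periodicOrbit

/-- An invariant finite set is the disjoint union of the periodic orbits of its points. -/
theorem dvd_card_of_mapsTo_of_minimalPeriod_eq {s : Finset α} {n : ℕ} (hn : 0 < n)
    (hs : Set.MapsTo f s s) (hper : ∀ x ∈ s, minimalPeriod f x = n) : n ∣ #s := by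
  set orb : α → Finset α := fun x => (periodicOrbit f x).toFinset
  have hperiodic : ∀ x ∈ s, x ∈ periodicPts f := fun x hx =>
    minimalPeriod_pos_iff_mem_periodicPts.1 (hper x hx ▸ hn)
  have hfiber : ∀ x ∈ s, {y ∈ s | orb y = orb x} = orb x := by
    intro x hx
    ext y
    simp only [mem_filter]
    constructor
    · rintro ⟨hy, hyx⟩
      exact hyx ▸ Cycle.mem_toFinset.2 (self_mem_periodicOrbit (hperiodic y hy))
    · intro hy
      obtain ⟨m, rfl⟩ := (mem_periodicOrbit_iff (hperiodic x hx)).1 (Cycle.mem_toFinset.1 hy)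
      exact ⟨hs.iterate m hx,
        congrArg Cycle.toFinset (periodicOrbit_apply_iterate_eq (hperiodic x hx) m)⟩
  rw [card_eq_sum_card_image orb s]
  refine dvd_sum fun o ho => ?_
  obtain ⟨x, hx, rfl⟩ := mem_image.1 ho
  rw [hfiber x hx, card_toFinset_periodicOrbit, hper x hx]

/-- Points of period `p ^ (k + 1)` that are not of period `p ^ k` have exact period
`p ^ (k + 1)`, and those come in orbits of that size. -/
theorem card_periodicPts_prime_pow_modEq {p k : ℕ} (hp : p.Prime) {s t : Finset α}
    (hs : ∀ x, IsPeriodicPt f (p ^ (k + 1)) x ↔ x ∈ s)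
    (ht : ∀ x, IsPeriodicPt f (p ^ k) x ↔ x ∈ t) :
    #t ≡ #s [MOD p ^ (k + 1)] := by
  have hts : t ⊆ s := fun x hx =>
    (hs x).1 (((ht x).2 hx).trans_dvd (pow_dvd_pow p k.le_succ))
  have hexact : ∀ x, x ∈ s \ t ↔ minimalPeriod f x = p ^ (k + 1) := fun x => by
    rw [mem_sdiff, ← hs, ← ht, minimalPeriod_eq_prime_pow_iff hp]
  have hmaps : Set.MapsTo f (s \ t : Finset α) (s \ t : Finset α) := fun x hx => by
    have hx' := (hexact x).1 hx
    rwa [Finset.mem_coe, hexact, minimalPeriod_apply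
      (minimalPeriod_pos_iff_mem_periodicPts.1 (hx' ▸ pow_pos hp.pos _))]
  have hdvd := dvd_card_of_mapsTo_of_minimalPeriod_eq (pow_pos hp.pos _) hmaps
    fun x hx => (hexact x).1 hx
  rw [card_sdiff_of_subset hts] at hdvd
  exact (Nat.modEq_iff_dvd' (card_le_card hts)).2 hdvd

end Function

theorem realizable_prime_power_congruence_general (U : ℕ → ℕ)
    (hreal : Realizable U) :
    ∀ p : ℕ, p.Prime → ∀ k : ℕ, 1 ≤ k →
      (U (p ^ k) : ℤ) ≡ (U (p ^ (k - 1)) : ℤ) [ZMOD (p ^ k)] := by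
  intro p hp k hk
  obtain ⟨k, rfl⟩ : ∃ j, k = j + 1 := ⟨k - 1, by omega⟩
  obtain ⟨X, T, hT⟩ := hreal
  classical
  obtain ⟨s, hs, hsU⟩ := hT (p ^ (k + 1)) (pow_pos hp.pos _)
  obtain ⟨t, ht, htU⟩ := hT (p ^ k) (pow_pos hp.pos _)
  rw [← hsU, Nat.add_sub_cancel, ← htU]
  exact_mod_cast (Function.card_periodicPts_prime_pow_modEq hp hs ht).symm

theorem realizable_prime_power_congruence (U : ℕ → ℕ)
    (hpos : ∀ n : ℕ, 1 ≤ n → 0 < U n) (hreal : Realizable U) :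
    ∀ p : ℕ, p.Prime → ∀ k : ℕ, 1 ≤ k →
      (U (p ^ k) : ℤ) ≡ (U (p ^ (k - 1)) : ℤ) [ZMOD (p ^ k)] :=
  realizable_prime_power_congruence_general U hreal
end

section
/- Conversely, if a sequence (U_n)_{n≥1} of positive integers satisfies (U*μ)(n) ≥ 0 and n | (U*μ)(n) for all n ≥ 1, then (U_n) is realizable: there exist a set X and T : X → X with U_n = #{x : T^n(x) = x} for all n ≥ 1. -/
/-!
Put `(U*μ)(d)/d` disjoint cycles of length `d` for every `d ≥ 1` and let `T` rotate each cycle.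
A point is fixed by `T^n` exactly when the length of its cycle divides `n`, so `T^n` has
`∑_{d ∣ n} (U*μ)(d)` fixed points, which is `U n` by Möbius inversion.
-/

open ArithmeticFunction ArithmeticFunction.Moebius Finset

theorem ArithmeticFunction.sum_divisors_sum_moebius_mul {R : Type*} [NonAssocRing R]
    (f : ℕ → R) {n : ℕ} (hn : 0 < n) :
    ∑ d ∈ n.divisors, ∑ e ∈ d.divisors, (μ (d / e) : R) * f e = f n := by
  refine (sum_eq_iff_sum_mul_moebius_eq.mpr (fun m _ => ?_)) n hn
  exact Nat.sum_divisorsAntidiagonal' (f := fun a b => (μ a : R) * f b)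

/-- The `k`-th summand consists of `c (k + 1)` cycles of length `k + 1`. -/
abbrev CycleSpace (c : ℕ → ℕ) : Type :=
  Σ k : ℕ, Fin (c (k + 1)) × ZMod (k + 1)

namespace CycleSpace

variable {c : ℕ → ℕ}

def rotate (c : ℕ → ℕ) (x : CycleSpace c) : CycleSpace c :=
  ⟨x.1, x.2.1, x.2.2 + 1⟩

theorem iterate_rotate (n : ℕ) (x : CycleSpace c) :
    (rotate c)^[n] x = ⟨x.1, x.2.1, x.2.2 + n⟩ := by
  induction n with
  | zero => simp
  | succ n ih =>
    rw [Function.iterate_succ_apply', ih, rotate]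
    simp [add_assoc]

theorem iterate_rotate_eq_self_iff {n : ℕ} {x : CycleSpace c} :
    (rotate c)^[n] x = x ↔ x.1 + 1 ∣ n := by
  obtain ⟨k, i, z⟩ := x
  rw [iterate_rotate, ← ZMod.natCast_eq_zero_iff]
  simp

def periodicPtsFinset (c : ℕ → ℕ) (n : ℕ) : Finset (CycleSpace c) :=
  (n.divisors.image (· - 1)).sigma fun _ => univ

theorem mem_periodicPtsFinset {n : ℕ} (hn : n ≠ 0) {x : CycleSpace c} :
    x ∈ periodicPtsFinset c n ↔ x.1 + 1 ∣ n := by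
  simp only [periodicPtsFinset, mem_sigma, mem_image, Nat.mem_divisors, mem_univ]
  constructor
  · rintro ⟨⟨d, ⟨hdn, -⟩, hd⟩, -⟩
    rwa [← hd, Nat.sub_add_cancel (Nat.pos_of_dvd_of_pos hdn (Nat.pos_of_ne_zero hn))]
  · exact fun h => ⟨⟨x.1 + 1, ⟨h, hn⟩, rfl⟩, trivial⟩

theorem card_periodicPtsFinset (n : ℕ) :
    #(periodicPtsFinset c n) = ∑ d ∈ n.divisors, c d * d := by
  have hpred : Set.InjOn (· - 1) (n.divisors : Set ℕ) := fun a ha b hb hab => by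
    have := Nat.pos_of_mem_divisors ha
    have := Nat.pos_of_mem_divisors hb
    simp only at hab
    omega
  rw [periodicPtsFinset, card_sigma, sum_image hpred]
  refine sum_congr rfl fun d hd => ?_
  rw [card_univ, Fintype.card_prod, Fintype.card_fin, ZMod.card,
    Nat.sub_add_cancel (Nat.pos_of_mem_divisors hd)]

end CycleSpace

noncomputable def cycleCount (U : ℕ → ℕ) (n : ℕ) : ℕ :=
  ((∑ d ∈ n.divisors, (μ (n / d) : ℤ) * (U d : ℤ)) / n).toNat

theorem cycleCount_mul {U : ℕ → ℕ} {n : ℕ} (hn : 1 ≤ n)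
    (hnonneg : 0 ≤ ∑ d ∈ n.divisors, (μ (n / d) : ℤ) * (U d : ℤ))
    (hdvd : (n : ℤ) ∣ ∑ d ∈ n.divisors, (μ (n / d) : ℤ) * (U d : ℤ)) :
    (cycleCount U n * n : ℤ) = ∑ d ∈ n.divisors, (μ (n / d) : ℤ) * (U d : ℤ) := by
  rw [cycleCount, Int.toNat_of_nonneg (Int.ediv_nonneg hnonneg (by positivity))]
  exact Int.ediv_mul_cancel hdvd

open ArithmeticFunction ArithmeticFunction.Moebius in
theorem realizable_of_moebius_conditions_general (U : ℕ → ℕ)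
    (hnonneg : ∀ n : ℕ, 1 ≤ n →
      0 ≤ ∑ d ∈ n.divisors, (μ (n / d) : ℤ) * (U d : ℤ))
    (hdvd : ∀ n : ℕ, 1 ≤ n →
      (n : ℤ) ∣ ∑ d ∈ n.divisors, (μ (n / d) : ℤ) * (U d : ℤ)) :
    ∃ (X : Type) (T : X → X), ∀ n : ℕ, 1 ≤ n →
      ∃ s : Finset X, (∀ x : X, T^[n] x = x ↔ x ∈ s) ∧ s.card = U n := by
  refine ⟨CycleSpace (cycleCount U), CycleSpace.rotate _, fun n hn =>
    ⟨CycleSpace.periodicPtsFinset _ n, fun x => ?_, ?_⟩⟩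
  · rw [CycleSpace.iterate_rotate_eq_self_iff, CycleSpace.mem_periodicPtsFinset (by omega)]
  · zify
    rw [CycleSpace.card_periodicPtsFinset, Nat.cast_sum,
      ← sum_divisors_sum_moebius_mul (fun d => (U d : ℤ)) hn]
    refine sum_congr rfl fun d hd => ?_
    have hd : 1 ≤ d := Nat.pos_of_mem_divisors hd
    exact_mod_cast cycleCount_mul hd (hnonneg d hd) (hdvd d hd)

open ArithmeticFunction ArithmeticFunction.Moebius in
theorem realizable_of_moebius_conditions (U : ℕ → ℕ)
    (hpos : ∀ n : ℕ, 1 ≤ n → 0 < U n)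
    (hnonneg : ∀ n : ℕ, 1 ≤ n →
      0 ≤ ∑ d ∈ n.divisors, (μ (n / d) : ℤ) * (U d : ℤ))
    (hdvd : ∀ n : ℕ, 1 ≤ n →
      (n : ℤ) ∣ ∑ d ∈ n.divisors, (μ (n / d) : ℤ) * (U d : ℤ)) :
    ∃ (X : Type) (T : X → X), ∀ n : ℕ, 1 ≤ n →
      ∃ s : Finset X, (∀ x : X, T^[n] x = x ↔ x ∈ s) ∧ s.card = U n :=
  realizable_of_moebius_conditions_general U hnonneg hdvd
end

section
/- Let β ∈ ℝ be irrational and define W_n ∈ ℤ \ {0} (n ≥ 1) to have sign (−1)^{⌊nβ⌋}. Suppose the sequence (|W_n|) is realizable, and that W_{2^k} is odd for all k, and that the sequence (W_{2^k} mod 4) is eventually periodic with period r. Then we get a contradiction; i.e., no such realizable sequence exists. -/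
lemma four_dvd_card {X : Type} [DecidableEq X] (f : X → X) :
    ∀ D : Finset X, (∀ x ∈ D, f x ∈ D) → (∀ x ∈ D, f (f (f (f x))) = x) →
    (∀ x ∈ D, f (f x) ≠ x) → 4 ∣ D.card := by
  intro D
  induction D using Finset.strongInduction with
  | _ D ih =>
    intro hmap h4 h2
    rcases D.eq_empty_or_nonempty with rfl | ⟨x, hx⟩
    · simp
    have hfix : ∀ y ∈ D, f y ≠ y := by
      intro y hy hfy
      exact h2 y hy (by rw [hfy, hfy])
    have hx1 : f x ∈ D := hmap x hx
    have hx2 : f (f x) ∈ D := hmap _ hx1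
    have hx3 : f (f (f x)) ∈ D := hmap _ hx2
    have ne1 : x ≠ f x := fun h => hfix x hx h.symm
    have ne2 : x ≠ f (f x) := fun h => h2 x hx h.symm
    have ne3 : x ≠ f (f (f x)) := by
      intro h
      apply hfix x hx
      calc f x = f (f (f (f x))) := by rw [← h]
        _ = x := h4 x hx
    have ne4 : f x ≠ f (f x) := fun h => hfix (f x) hx1 h.symm
    have ne5 : f x ≠ f (f (f x)) := fun h => h2 (f x) hx1 h.symm
    have ne6 : f (f x) ≠ f (f (f x)) := fun h => hfix (f (f x)) hx2 h.symm
    set O : Finset X := {x, f x, f (f x), f (f (f x))} with hO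
    have hOD : O ⊆ D := by
      intro y hy
      simp only [hO, Finset.mem_insert, Finset.mem_singleton] at hy
      rcases hy with rfl | rfl | rfl | rfl <;> assumption
    have hcardO : O.card = 4 := by
      rw [hO]
      rw [Finset.card_insert_of_notMem (by simp [ne1, ne2, ne3]),
        Finset.card_insert_of_notMem (by simp [ne4, ne5]),
        Finset.card_insert_of_notMem (by simp [ne6]), Finset.card_singleton]
    have hmemO : ∀ y ∈ D, f y ∈ O → y ∈ O := by
      intro y hy hfy
      have hy4 : f (f (f (f y))) = y := h4 y hy
      simp only [hO, Finset.mem_insert, Finset.mem_singleton] at hfy ⊢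
      rcases hfy with h | h | h | h
      · right; right; right; rw [← hy4, h]
      · left; rw [← hy4, h, h4 x hx]
      · right; left; rw [← hy4, h]
        congr 1
        exact h4 x hx
      · right; right; left; rw [← hy4, h]
        congr 2
        exact h4 x hx
    have hsub : D \ O ⊂ D :=
      Finset.sdiff_ssubset hOD (by exact ⟨x, by simp [hO]⟩)
    have hdvd : 4 ∣ (D \ O).card := by
      apply ih _ hsub
      · intro y hy
        rw [Finset.mem_sdiff] at hy ⊢
        exact ⟨hmap y hy.1, fun h => hy.2 (hmemO y hy.1 h)⟩
      · intro y hy; exact h4 y (Finset.mem_sdiff.mp hy).1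
      · intro y hy; exact h2 y (Finset.mem_sdiff.mp hy).1
    have : (D \ O).card + O.card = D.card := Finset.card_sdiff_add_card_eq_card hOD
    omega

lemma card_congr_mod4 {X : Type} [DecidableEq X] (T : X → X) (k : ℕ) (hk : 2 ≤ k)
    (s t : Finset X) (hs : ∀ x, T^[2 ^ k] x = x ↔ x ∈ s)
    (ht : ∀ x, T^[2 ^ (k - 1)] x = x ↔ x ∈ t) :
    (s.card : ZMod 4) = t.card := by
  have e3 : 2 ^ k = 2 ^ (k - 1) + 2 ^ (k - 1) := by
    have h1 : k = (k - 1) + 1 := by omega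
    calc 2 ^ k = 2 ^ ((k - 1) + 1) := by rw [← h1]
      _ = 2 ^ (k - 1) + 2 ^ (k - 1) := by rw [pow_succ]; ring
  have e1 : 2 ^ (k - 1) = 2 ^ (k - 2) + 2 ^ (k - 2) := by
    have h1 : k - 1 = (k - 2) + 1 := by omega
    calc 2 ^ (k - 1) = 2 ^ ((k - 2) + 1) := by rw [← h1]
      _ = 2 ^ (k - 2) + 2 ^ (k - 2) := by rw [pow_succ]; ring
  obtain ⟨m, e1, e2⟩ : ∃ m, 2 ^ (k - 1) = m + m ∧ 2 ^ k = m + m + m + m :=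
    ⟨2 ^ (k - 2), e1, by omega⟩
  have hts : t ⊆ s := by
    intro x hx
    have h1 := (ht x).mpr hx
    apply (hs x).mp
    rw [e3, Function.iterate_add_apply, h1, h1]
  have hcomm : ∀ (a b : ℕ) (x : X), T^[a] (T^[b] x) = T^[b] (T^[a] x) := by
    intro a b x
    rw [← Function.iterate_add_apply, ← Function.iterate_add_apply, Nat.add_comm]
  have hdvd : 4 ∣ (s \ t).card := by
    apply four_dvd_card (T^[m])
    · intro x hx
      rw [Finset.mem_sdiff] at hx ⊢
      obtain ⟨hxs, hxt⟩ := hx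
      have hxs' := (hs x).mpr hxs
      constructor
      · apply (hs _).mp
        rw [hcomm, hxs']
      · intro hmem
        apply hxt
        have hy : T^[m + m] (T^[m] x) = T^[m] x := by
          have := (ht _).mpr hmem
          rwa [e1] at this
        have hx4 : T^[m + m + m] (T^[m] x) = x := by
          rw [← Function.iterate_add_apply, ← e2, hxs']
        apply (ht x).mp
        rw [e1]
        calc T^[m + m] x = T^[m + m] (T^[m + m + m] (T^[m] x)) := by rw [hx4]
          _ = T^[m + m + m] (T^[m + m] (T^[m] x)) := hcomm _ _ _
          _ = T^[m + m + m] (T^[m] x) := by rw [hy]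
          _ = x := hx4
    · intro x hx
      have hxs' := (hs x).mpr (Finset.mem_sdiff.mp hx).1
      rw [← Function.iterate_add_apply, ← Function.iterate_add_apply,
        ← Function.iterate_add_apply, ← e2, hxs']
    · intro x hx
      rw [← Function.iterate_add_apply, ← e1]
      exact fun h => (Finset.mem_sdiff.mp hx).2 ((ht x).mp h)
  have hcard : (s \ t).card + t.card = s.card := Finset.card_sdiff_add_card_eq_card hts
  have : (s.card : ZMod 4) = ((s \ t).card : ZMod 4) + t.card := by
    rw [← hcard]; push_cast; ring
  rw [this, (ZMod.natCast_eq_zero_iff _ 4).mpr hdvd, zero_add]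


lemma floor_double_cases (t : ℝ) : ⌊2 * t⌋ = 2 * ⌊t⌋ ∨ ⌊2 * t⌋ = 2 * ⌊t⌋ + 1 := by
  have h1 : 2 * ⌊t⌋ ≤ ⌊2 * t⌋ := Int.le_floor.mpr (by push_cast; linarith [Int.floor_le t])
  have h2 : ⌊2 * t⌋ < 2 * ⌊t⌋ + 2 := Int.floor_lt.mpr (by push_cast; linarith [Int.lt_floor_add_one t])
  omega

lemma eq_int_of_even_iff (x y : ℝ)
    (h : ∀ n : ℕ, (Even ⌊(2:ℝ) ^ n * x⌋ ↔ Even ⌊(2:ℝ) ^ n * y⌋)) :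
    x - y = (⌊x⌋ - ⌊y⌋ : ℤ) := by
  have key : ∀ n : ℕ, ⌊(2:ℝ) ^ n * x⌋ - ⌊(2:ℝ) ^ n * y⌋ = 2 ^ n * (⌊x⌋ - ⌊y⌋) := by
    intro n
    induction n with
    | zero => simp
    | succ n ih =>
      have ex : (2:ℝ) ^ (n + 1) * x = 2 * ((2:ℝ) ^ n * x) := by ring
      have ey : (2:ℝ) ^ (n + 1) * y = 2 * ((2:ℝ) ^ n * y) := by ring
      have hx := floor_double_cases ((2:ℝ) ^ n * x)
      have hy := floor_double_cases ((2:ℝ) ^ n * y)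
      rw [ex, ey]
      have hpar := h (n + 1)
      rw [ex, ey, Int.even_iff, Int.even_iff] at hpar
      have hpow : (2:ℤ) ^ (n + 1) * (⌊x⌋ - ⌊y⌋) = 2 * (2 ^ n * (⌊x⌋ - ⌊y⌋)) := by ring
      rw [hpow]
      -- omega with hpar as mod statement
      rcases hx with hx | hx <;> rcases hy with hy | hy <;> rw [hx, hy] at hpar ⊢ <;> omega
  -- now the bound
  set c : ℤ := ⌊x⌋ - ⌊y⌋ with hc
  by_contra hne
  have hne' : x - y - c ≠ 0 := fun h => hne (by linarith [h])
  obtain ⟨n, hn⟩ := pow_unbounded_of_one_lt (y := (2:ℝ)) |x - y - (c:ℝ)|⁻¹ one_lt_two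
  have hb : |(2:ℝ) ^ n * (x - y - c)| < 1 := by
    have f1 : (2:ℝ) ^ n * x - 1 < (⌊(2:ℝ) ^ n * x⌋ : ℝ) := by
      linarith [Int.lt_floor_add_one ((2:ℝ) ^ n * x)]
    have f2 : ((⌊(2:ℝ) ^ n * x⌋ : ℝ)) ≤ (2:ℝ) ^ n * x := Int.floor_le _
    have f3 : (2:ℝ) ^ n * y - 1 < (⌊(2:ℝ) ^ n * y⌋ : ℝ) := by
      linarith [Int.lt_floor_add_one ((2:ℝ) ^ n * y)]
    have f4 : ((⌊(2:ℝ) ^ n * y⌋ : ℝ)) ≤ (2:ℝ) ^ n * y := Int.floor_le _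
    have k1 := key n
    have k2 : ((⌊(2:ℝ) ^ n * x⌋ : ℝ)) - ((⌊(2:ℝ) ^ n * y⌋ : ℝ)) = 2 ^ n * (c : ℝ) := by
      have := congrArg (fun z : ℤ => (z : ℝ)) k1
      push_cast at this ⊢
      linarith [this]
    rw [abs_lt]
    constructor <;> nlinarith
  have hpos : 0 < |x - y - (c:ℝ)| := abs_pos.mpr hne'
  rw [abs_mul, abs_pow, abs_two] at hb
  have : |x - y - (c:ℝ)|⁻¹ < 2 ^ n := hn
  have h2 : 1 < (2:ℝ) ^ n * |x - y - (c:ℝ)| := by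
    have hm := mul_lt_mul_of_pos_right hn hpos
    rwa [inv_mul_cancel₀ (ne_of_gt hpos)] at hm
  linarith

theorem eds_sign_not_realizable (β : ℝ) (hβ : Irrational β) (W : ℕ → ℤ)
    (hnz : ∀ n : ℕ, 1 ≤ n → W n ≠ 0)
    (hsign : ∀ n : ℕ, 1 ≤ n → (0 < W n ↔ Even ⌊(n : ℝ) * β⌋))
    (hreal : Realizable (fun n => (W n).natAbs))
    (hodd : ∀ k : ℕ, Odd (W (2 ^ k)))
    (r : ℕ) (hr : 1 ≤ r)
    (hper : ∃ K : ℕ, ∀ k : ℕ, K ≤ k → W (2 ^ (r + k)) ≡ W (2 ^ k) [ZMOD 4]) :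
    False := by
  classical
  obtain ⟨K, hK⟩ := hper
  obtain ⟨X, T, hT⟩ := hreal
  -- Step 1: |W (2^k)| is constant mod 4 for k ≥ 1
  have hconst : ∀ k : ℕ, 1 ≤ k →
      (((W (2 ^ k)).natAbs : ZMod 4)) = (((W 2).natAbs : ZMod 4)) := by
    intro k hk
    induction k with
    | zero => omega
    | succ k ih =>
      rcases Nat.lt_or_ge k 1 with h | h
      · have hk0 : k = 0 := by omega
        subst hk0
        norm_num
      · obtain ⟨s, hs, hcs⟩ := hT (2 ^ (k + 1)) Nat.one_le_two_pow
        obtain ⟨t, ht, hct⟩ := hT (2 ^ k) Nat.one_le_two_pow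
        have hcc := card_congr_mod4 T (k + 1) (by omega) s t hs (by simpa using ht)
        simp only at hcs hct
        rw [hcs, hct] at hcc
        rw [hcc]
        exact ih h
  set c : ZMod 4 := ((W 2).natAbs : ZMod 4) with hc
  -- Step 2: c + c ≠ 0
  have hcc : c + c ≠ 0 := by
    have hu : Odd (W 2).natAbs := Int.natAbs_odd.mpr (by simpa using hodd 1)
    have hm : ((W 2).natAbs : ZMod 4) = (((W 2).natAbs % 4 : ℕ) : ZMod 4) :=
      (ZMod.natCast_mod _ 4).symm
    have h13 : (W 2).natAbs % 4 = 1 ∨ (W 2).natAbs % 4 = 3 := by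
      have := Nat.odd_iff.mp hu
      omega
    rw [hc, hm]
    rcases h13 with h | h <;> rw [h] <;> decide
  -- natAbs casts
  have habs : ∀ m : ℕ, 1 ≤ m →
      ((W m : ZMod 4) = ((W m).natAbs : ZMod 4) ∧ 0 < W m) ∨
      ((W m : ZMod 4) = -((W m).natAbs : ZMod 4) ∧ ¬ 0 < W m) := by
    intro m hm
    rcases lt_or_gt_of_ne (hnz m hm) with h | h
    · right
      refine ⟨?_, not_lt.mpr h.le⟩
      have h1 : ((W m).natAbs : ℤ) = -(W m) := Int.ofNat_natAbs_of_nonpos h.le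
      have h2 : ((W m).natAbs : ZMod 4) = (((W m).natAbs : ℤ) : ZMod 4) :=
        (Int.cast_natCast _).symm
      rw [h2, h1, Int.cast_neg, neg_neg]
    · left
      refine ⟨?_, h⟩
      have h1 : ((W m).natAbs : ℤ) = W m := Int.natAbs_of_nonneg h.le
      have h2 : ((W m).natAbs : ZMod 4) = (((W m).natAbs : ℤ) : ZMod 4) :=
        (Int.cast_natCast _).symm
      rw [h2, h1]
  -- Step 3: signs agree
  have hsigneq : ∀ k : ℕ, K ≤ k → 1 ≤ k → (0 < W (2 ^ (r + k)) ↔ 0 < W (2 ^ k)) := by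
    intro k hKk h1k
    have hmod : (W (2 ^ (r + k)) : ZMod 4) = (W (2 ^ k) : ZMod 4) :=
      (ZMod.intCast_eq_intCast_iff _ _ _).mpr (hK k hKk)
    have ha := hconst (r + k) (by omega)
    have hb := hconst k h1k
    rcases habs (2 ^ (r + k)) Nat.one_le_two_pow with ⟨h1, h1p⟩ | ⟨h1, h1p⟩ <;>
      rcases habs (2 ^ k) Nat.one_le_two_pow with ⟨h2, h2p⟩ | ⟨h2, h2p⟩
    · exact iff_of_true h1p h2p
    · exfalso
      apply hcc
      rw [h1, h2, ha, hb] at hmod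
      linear_combination hmod
    · exfalso
      apply hcc
      rw [h1, h2, ha, hb] at hmod
      linear_combination -hmod
    · exact iff_of_false h1p h2p
  -- Step 4: parity of ⌊2^k β⌋ is periodic
  have hpar : ∀ k : ℕ, K ≤ k → 1 ≤ k →
      (Even ⌊(2:ℝ) ^ (r + k) * β⌋ ↔ Even ⌊(2:ℝ) ^ k * β⌋) := by
    intro k hKk h1k
    have e1 := hsign (2 ^ (r + k)) Nat.one_le_two_pow
    have e2 := hsign (2 ^ k) Nat.one_le_two_pow
    push_cast at e1 e2
    rw [← e1, ← e2]
    exact hsigneq k hKk h1k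
  -- Step 5: conclude rationality
  set K1 : ℕ := K + 1 with hK1
  have key := eq_int_of_even_iff ((2:ℝ) ^ (K1 + r) * β) ((2:ℝ) ^ K1 * β) ?_
  · set c0 : ℤ := ⌊(2:ℝ) ^ (K1 + r) * β⌋ - ⌊(2:ℝ) ^ K1 * β⌋ with hc0
    have hden : (2:ℝ) ^ (K1 + r) - (2:ℝ) ^ K1 ≠ 0 := by
      have : (2:ℝ) ^ K1 < (2:ℝ) ^ (K1 + r) := by
        apply pow_lt_pow_right₀ one_lt_two
        omega
      linarith
    apply hβ
    refine ⟨(c0 : ℚ) / ((2:ℚ) ^ (K1 + r) - (2:ℚ) ^ K1), ?_⟩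
    push_cast
    rw [div_eq_iff hden]
    linear_combination -key
  · intro n
    have hp1 : (2:ℝ) ^ (r + (n + K1)) = 2 ^ n * 2 ^ (K1 + r) := by
      rw [← pow_add]
      congr 1
      omega
    have hp2 : (2:ℝ) ^ (n + K1) = 2 ^ n * 2 ^ K1 := pow_add 2 n K1
    have ex : (2:ℝ) ^ n * ((2:ℝ) ^ (K1 + r) * β) = (2:ℝ) ^ (r + (n + K1)) * β := by
      rw [hp1]; ring
    have ey : (2:ℝ) ^ n * ((2:ℝ) ^ K1 * β) = (2:ℝ) ^ (n + K1) * β := by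
      rw [hp2]; ring
    rw [ex, ey]
    exact hpar (n + K1) (by omega) (by omega)
end

section
/- Suppose a sequence of nonzero integers (W_n)_{n≥1} satisfies W_{2^{r+k}} ≡ W_{2^k} (mod 4) for all k ≥ K (some r ≥ 1, K ≥ 0) and |W_{2^k}| ≡ |W_{2^{k−1}}| (mod 4) for all k ≥ 2, with every W_{2^k} odd. Then for each 0 ≤ j < r, the sign of W_{2^{ri+j}} is eventually constant as i → ∞. -/
/-!
For odd `m`, the residue of `m - |m|` modulo 4 is `0` if `m > 0` and `2` if `m < 0`, so the
residues of `m` and `|m|` modulo 4 together determine the sign of `m`. Along `k ↦ W (2 ^ k)` the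
residue of `|W (2 ^ k)|` never changes, and the residue of `W (2 ^ k)` is `r`-periodic from `K`
on; hence so is the sign, which is therefore eventually constant on each class of `k` modulo `r`.
-/

lemma Int.sign_eq_of_modEq_four {m n : ℤ} (hm : Odd m) (hn : Odd n)
    (h : m ≡ n [ZMOD 4]) (habs : |m| ≡ |n| [ZMOD 4]) : m.sign = n.sign := by
  obtain ⟨a, rfl⟩ := hm
  obtain ⟨b, rfl⟩ := hn
  have d := h.dvd
  have d' := habs.dvd
  rcases lt_or_gt_of_ne (show 2 * a + 1 ≠ 0 by omega) with ha | ha <;>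
    rcases lt_or_gt_of_ne (show 2 * b + 1 ≠ 0 by omega) with hb | hb <;>
    simp only [abs_of_neg, abs_of_pos, Int.sign_eq_one_of_pos, Int.sign_eq_neg_one_of_neg,
      ha, hb] at d d' ⊢ <;>
    omega

lemma Int.ModEq.of_forall_modEq_pred {n : ℤ} {a : ℕ → ℤ}
    (h : ∀ k, 2 ≤ k → a k ≡ a (k - 1) [ZMOD n]) {k : ℕ} (hk : 1 ≤ k) : a k ≡ a 1 [ZMOD n] := by
  induction k, hk using Nat.le_induction with
  | base => rfl
  | succ k hk ih => exact (h (k + 1) (by omega)).trans ih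

lemma eq_of_forall_add_period_eq {α : Type*} {f : ℕ → α} {r N : ℕ}
    (h : ∀ k, N ≤ k → f (r + k) = f k) (j : ℕ) {i : ℕ} (hi : N ≤ i) :
    f (r * i + j) = f (r * N + j) := by
  rcases Nat.eq_zero_or_pos r with rfl | hr
  · simp
  induction i, hi using Nat.le_induction with
  | base => rfl
  | succ i hi ih =>
    rw [show r * (i + 1) + j = r + (r * i + j) by ring, h _ (le_trans hi (by nlinarith)), ih]

theorem sign_eventually_constant_general (W : ℕ → ℤ)
    (hodd : ∀ k : ℕ, Odd (W (2 ^ k)))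
    (r K : ℕ)
    (h1 : ∀ k : ℕ, K ≤ k → W (2 ^ (r + k)) ≡ W (2 ^ k) [ZMOD 4])
    (h2 : ∀ k : ℕ, 2 ≤ k → |W (2 ^ k)| ≡ |W (2 ^ (k - 1))| [ZMOD 4]) :
    ∀ j : ℕ, j < r → ∃ (I : ℕ) (s : ℤ), ∀ i : ℕ, I ≤ i →
      Int.sign (W (2 ^ (r * i + j))) = s := by
  intro j _
  have habs (k : ℕ) (hk : 1 ≤ k) : |W (2 ^ k)| ≡ |W (2 ^ 1)| [ZMOD 4] :=
    Int.ModEq.of_forall_modEq_pred (a := fun k ↦ |W (2 ^ k)|) h2 hk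
  have hperiodic (k : ℕ) (hk : max K 1 ≤ k) :
      (W (2 ^ (r + k))).sign = (W (2 ^ k)).sign :=
    Int.sign_eq_of_modEq_four (hodd _) (hodd _) (h1 k (le_of_max_le_left hk))
      ((habs _ (by omega)).trans (habs k (le_of_max_le_right hk)).symm)
  exact ⟨max K 1, _, fun i hi ↦
    eq_of_forall_add_period_eq (f := fun k ↦ (W (2 ^ k)).sign) hperiodic j hi⟩

theorem sign_eventually_constant (W : ℕ → ℤ) (hnz : ∀ n : ℕ, 1 ≤ n → W n ≠ 0)
    (hodd : ∀ k : ℕ, Odd (W (2 ^ k)))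
    (r K : ℕ) (hr : 1 ≤ r)
    (h1 : ∀ k : ℕ, K ≤ k → W (2 ^ (r + k)) ≡ W (2 ^ k) [ZMOD 4])
    (h2 : ∀ k : ℕ, 2 ≤ k → |W (2 ^ k)| ≡ |W (2 ^ (k - 1))| [ZMOD 4]) :
    ∀ j : ℕ, j < r → ∃ (I : ℕ) (s : ℤ), ∀ i : ℕ, I ≤ i →
      Int.sign (W (2 ^ (r * i + j))) = s :=
  sign_eventually_constant_general W hodd r K h1 h2
end
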